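/- arXiv:2007.07490 — 3 statements merged into one kernel-verified Lean document; each statement's English description precedes it below -/
import Mathlib

section
/- Let G be a group and let H be a normal subgroup of G that is conjugacy stable in G. Then every normal subgroup of H is normal in G (i.e., H is a transitively normal subgroup of G). -/
/-- `H` is conjugacy stable in `G`: any two elements of `H` that are conjugate in `G`
are already conjugate by an element of `H`. -/
def ConjugacyStable {G : Type*} [Group G] (H : Subgroup G) : Prop :=
  ∀ u v : G, u ∈ H → v ∈ H → (∃ g : G, g⁻¹ * u * g = v) → ∃ h ∈ H, h⁻¹ * u * h = v

theorem ConjugacyStable.exists_mem_conj_eq {G : Type*} [Group G] {H : Subgroup G}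
    (hstab : ConjugacyStable H) (hH : H.Normal) {n : G} (hn : n ∈ H) (g : G) :
    ∃ h ∈ H, h⁻¹ * n * h = g⁻¹ * n * g := by
  have hconj : g⁻¹ * n * g⁻¹⁻¹ ∈ H := hH.conj_mem n hn g⁻¹
  rw [inv_inv] at hconj
  exact hstab n _ hn hconj ⟨g, rfl⟩

theorem normal_conjugacyStable_transitively_normal {G : Type*} [Group G]
    (H : Subgroup G) (hH : H.Normal) (hstab : ConjugacyStable H)
    (N : Subgroup G) (hNH : N ≤ H)
    (hNnormalH : ∀ h ∈ H, ∀ n ∈ N, h⁻¹ * n * h ∈ N) : N.Normal := by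
  refine ⟨fun n hn g => ?_⟩
  obtain ⟨h, hh, hconj⟩ := hstab.exists_mem_conj_eq hH (hNH hn) g⁻¹
  rw [inv_inv] at hconj
  exact hconj ▸ hNnormalH h hh n hn
end

section
/- Let G be a group and let H ≤ G be a subgroup satisfying the BNTCI property with representatives g₁, …, g_n ∈ G. Then H is conjugacy stable in G if and only if for every i ∈ {1, …, n} and every non-trivial u ∈ g_iHg_i⁻¹ ∩ H, the intersection H ∩ C_G(u)g_i is non-empty. -/
/-- The conjugate subgroup `g H g⁻¹`. -/
def conjSubgroup {G : Type*} [Group G] (g : G) (H : Subgroup G) : Subgroup G :=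
  H.map (MulAut.conj g).toMonoidHom

/-- `H ≤ G` satisfies the BNTCI property with representatives `gᵢ`, `i : Fin n`:
whenever `g⁻¹ H g ∩ H ≠ 1`, the element `g` lies in a double coset `H gᵢ H`. -/
def BNTCI {G : Type*} [Group G] (H : Subgroup G) {n : ℕ} (reps : Fin n → G) : Prop :=
  ∀ g : G, conjSubgroup g⁻¹ H ⊓ H ≠ ⊥ →
    ∃ i : Fin n, ∃ h ∈ H, ∃ f ∈ H, g = h * reps i * f

section

variable {G : Type*} [Group G] {H : Subgroup G}

theorem mem_conjSubgroup_iff {g x : G} : x ∈ conjSubgroup g H ↔ g⁻¹ * x * g ∈ H := by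
  rw [conjSubgroup, Subgroup.mem_map_equiv, MulAut.conj_symm_apply]

theorem inv_mul_mul_ne_one {u : G} (g : G) (hu : u ≠ 1) : g⁻¹ * u * g ≠ 1 := by
  simpa using (conj_eq_one_iff (a := g⁻¹)).not.2 hu

theorem conjSubgroup_inv_inf_ne_bot {u g : G} (hu : u ≠ 1) (huH : u ∈ H)
    (hconj : g⁻¹ * u * g ∈ H) : conjSubgroup g⁻¹ H ⊓ H ≠ ⊥ :=
  (Subgroup.ne_bot_iff_exists_ne_one).2
    ⟨⟨g⁻¹ * u * g, mem_conjSubgroup_iff.2 (by simpa [mul_assoc] using huH), hconj⟩,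
      fun e => inv_mul_mul_ne_one g hu (congrArg Subtype.val e)⟩

theorem inv_mul_mul_eq_iff_mul_inv_mem_centralizer (u g h : G) :
    h⁻¹ * u * h = g⁻¹ * u * g ↔ h * g⁻¹ ∈ Subgroup.centralizer {u} := by
  rw [Subgroup.mem_centralizer_singleton_iff]
  constructor <;> intro e
  · calc h * g⁻¹ * u = h * (g⁻¹ * u * g) * g⁻¹ := by group
      _ = u * (h * g⁻¹) := by rw [← e]; group
  · calc h⁻¹ * u * h = h⁻¹ * (u * (h * g⁻¹)) * g := by group
      _ = g⁻¹ * u * g := by rw [← e]; group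

theorem exists_conj_eq_iff_inter_centralizer_coset_nonempty (u g : G) :
    (∃ h ∈ H, h⁻¹ * u * h = g⁻¹ * u * g) ↔
      ((H : Set G) ∩ ((fun a => a * g) '' (Subgroup.centralizer {u} : Set G))).Nonempty := by
  simp_rw [inv_mul_mul_eq_iff_mul_inv_mem_centralizer]
  constructor
  · rintro ⟨h, hH, hc⟩
    exact ⟨h, hH, h * g⁻¹, hc, by group⟩
  · rintro ⟨_, hH, c, hc, rfl⟩
    exact ⟨c * g, hH, by simpa using hc⟩

theorem exists_conj_eq_of_mul_mul {u h r f : G} (hh : h ∈ H) (hf : f ∈ H)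
    (hr : ∃ k ∈ H, k⁻¹ * (h⁻¹ * u * h) * k = r⁻¹ * (h⁻¹ * u * h) * r) :
    ∃ k ∈ H, k⁻¹ * u * k = (h * r * f)⁻¹ * u * (h * r * f) := by
  obtain ⟨k, hk, e⟩ := hr
  refine ⟨h * k * f, H.mul_mem (H.mul_mem hh hk) hf, ?_⟩
  calc (h * k * f)⁻¹ * u * (h * k * f) = f⁻¹ * (k⁻¹ * (h⁻¹ * u * h) * k) * f := by group
    _ = (h * r * f)⁻¹ * u * (h * r * f) := by rw [e]; group

end

theorem conjugacyStable_iff_of_BNTCI {G : Type*} [Group G] (H : Subgroup G)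
    {n : ℕ} (reps : Fin n → G) (hbntci : BNTCI H reps) :
    ConjugacyStable H ↔
      ∀ i : Fin n, ∀ u : G, u ≠ 1 → u ∈ conjSubgroup (reps i) H ⊓ H →
        ((H : Set G) ∩
          ((fun a => a * reps i) '' (Subgroup.centralizer {u} : Set G))).Nonempty := by
  constructor
  · intro hstable i u _ hu
    rw [← exists_conj_eq_iff_inter_centralizer_coset_nonempty]
    exact hstable u _ hu.2 (mem_conjSubgroup_iff.1 hu.1) ⟨reps i, rfl⟩
  · rintro hreps u _ hu hv ⟨g, rfl⟩
    rcases eq_or_ne u 1 with rfl | hu1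
    · exact ⟨1, H.one_mem, by simp⟩
    obtain ⟨i, h, hh, f, hf, rfl⟩ := hbntci _ (conjSubgroup_inv_inf_ne_bot hu1 hu hv)
    have hu'H : h⁻¹ * u * h ∈ H := H.mul_mem (H.mul_mem (H.inv_mem hh) hu) hh
    have hu'conj : h⁻¹ * u * h ∈ conjSubgroup (reps i) H := by
      rw [mem_conjSubgroup_iff]
      convert H.mul_mem (H.mul_mem hf hv) (H.inv_mem hf) using 1
      group
    apply exists_conj_eq_of_mul_mul hh hf
    rw [exists_conj_eq_iff_inter_centralizer_coset_nonempty]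
    exact hreps i _ (inv_mul_mul_ne_one h hu1) ⟨hu'conj, hu'H⟩
end

section
/- Let G be a fully residually free group (hence commutative transitive) and let H ≤ G be a subgroup. Suppose 𝒥 is a finite collection of non-trivial abelian subgroups of H such that for every g ∈ G \ H with g⁻¹Hg ∩ H ≠ 1 there exist J ∈ 𝒥 and f ∈ H with g⁻¹Hg ∩ H = f⁻¹Jf. Then H is conjugacy stable in G if and only if for every C, D ∈ 𝒥 and every w ∈ G \ H with w⁻¹Cw = D, the intersection H ∩ C̄w is non-empty, where C̄ denotes the maximal abelian subgroup of G containing C (equivalently, the centralizer in G of any non-trivial element of C). -/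
/-- A group `G` is fully residually free if for every finite set of non-trivial
elements of `G` there is a homomorphism to a free group that does not kill any of them. -/
def FullyResiduallyFree (G : Type*) [Group G] : Prop :=
  ∀ s : Finset G, (∀ g ∈ s, g ≠ 1) →
    ∃ (β : Type) (φ : G →* FreeGroup β), ∀ g ∈ s, φ g ≠ 1

/-!
Both sides say that whenever `u ∈ H` is conjugated into `H` by some `w ∉ H`, the conjugation
`w⁻¹ u w` can already be realised inside `H`: indeed `h ∈ H ∩ C_G(u) w` exactly when
`h⁻¹ u h = w⁻¹ u w`. For the converse, take `u ∈ H` with `v = g⁻¹ u g ∈ H` and `g ∉ H`.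
The covering hypothesis writes `gHg⁻¹ ∩ H = e⁻¹ C e` and `g⁻¹Hg ∩ H = f⁻¹ D f` with
`e, f ∈ H`; then `w = e g f⁻¹ ∉ H` conjugates `C` onto `D`, so the criterion applied to
`e u e⁻¹ ∈ C` and `w` yields `x ∈ H` fusing `e u e⁻¹` with its `w`-conjugate, and
`e⁻¹ x f` fuses `u` with `v`.
-/

lemma Subgroup.ne_bot_of_mem_of_ne_one {G : Type*} [Group G] {K : Subgroup G} {x : G}
    (hx : x ∈ K) (hx1 : x ≠ 1) : K ≠ ⊥ :=
  fun hbot => hx1 (Subgroup.mem_bot.mp (hbot ▸ hx))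

section conjSubgroup

variable {G : Type*} [Group G]

lemma mem_conjSubgroup {g x : G} {K : Subgroup G} :
    x ∈ conjSubgroup g K ↔ g⁻¹ * x * g ∈ K := by
  constructor
  · rintro ⟨y, hy, rfl⟩
    simpa [mul_assoc] using hy
  · intro hx
    exact ⟨g⁻¹ * x * g, hx, by simp [mul_assoc]⟩

lemma conjSubgroup_one (K : Subgroup G) : conjSubgroup 1 K = K := by
  ext x
  simp [mem_conjSubgroup]

lemma conjSubgroup_mul (a b : G) (K : Subgroup G) :
    conjSubgroup (a * b) K = conjSubgroup a (conjSubgroup b K) := by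
  ext x
  simp [mem_conjSubgroup, mul_assoc]

lemma conjSubgroup_inf (g : G) (K L : Subgroup G) :
    conjSubgroup g (K ⊓ L) = conjSubgroup g K ⊓ conjSubgroup g L := by
  ext x
  simp [mem_conjSubgroup]

lemma conjSubgroup_conjSubgroup_inv (g : G) (K : Subgroup G) :
    conjSubgroup g (conjSubgroup g⁻¹ K) = K := by
  rw [← conjSubgroup_mul, mul_inv_cancel, conjSubgroup_one]

lemma conjSubgroup_inv_conjSubgroup_inf (g : G) (H : Subgroup G) :
    conjSubgroup g⁻¹ (conjSubgroup g H ⊓ H) = conjSubgroup g⁻¹ H ⊓ H := by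
  rw [conjSubgroup_inf, ← conjSubgroup_mul, inv_mul_cancel, conjSubgroup_one, inf_comm]

lemma conjSubgroup_eq_of_inf_eq_conjSubgroup {H C D : Subgroup G} {g e f : G}
    (hC : conjSubgroup g H ⊓ H = conjSubgroup e⁻¹ C)
    (hD : conjSubgroup g⁻¹ H ⊓ H = conjSubgroup f⁻¹ D) :
    conjSubgroup (e * g * f⁻¹)⁻¹ C = D := by
  have hw : (e * g * f⁻¹)⁻¹ = f * g⁻¹ * e⁻¹ := by group
  rw [hw, conjSubgroup_mul, ← hC, conjSubgroup_mul, conjSubgroup_inv_conjSubgroup_inf, hD,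
    conjSubgroup_conjSubgroup_inv]

end conjSubgroup

section fusion

variable {G : Type*} [Group G]

lemma mul_inv_mem_centralizer_iff {u h w : G} :
    h * w⁻¹ ∈ Subgroup.centralizer {u} ↔ h⁻¹ * u * h = w⁻¹ * u * w := by
  rw [Subgroup.mem_centralizer_singleton_iff]
  constructor <;> intro hc
  · calc h⁻¹ * u * h = h⁻¹ * (u * (h * w⁻¹)) * w := by group
      _ = h⁻¹ * ((h * w⁻¹) * u) * w := by rw [← hc]
      _ = w⁻¹ * u * w := by group
  · calc h * w⁻¹ * u = h * (w⁻¹ * u * w) * w⁻¹ := by group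
      _ = h * (h⁻¹ * u * h) * w⁻¹ := by rw [hc]
      _ = u * (h * w⁻¹) := by group

lemma inter_image_mul_centralizer_nonempty_iff (H : Subgroup G) (u w : G) :
    ((H : Set G) ∩ ((fun a => a * w) '' (Subgroup.centralizer {u} : Set G))).Nonempty ↔
      ∃ h ∈ H, h⁻¹ * u * h = w⁻¹ * u * w := by
  constructor
  · rintro ⟨h, hH, z, hz, rfl⟩
    exact ⟨z * w, hH, mul_inv_mem_centralizer_iff.mp (by simpa using hz)⟩
  · rintro ⟨h, hH, hconj⟩
    exact ⟨h, hH, h * w⁻¹, mul_inv_mem_centralizer_iff.mpr hconj, by simp⟩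

lemma conjugacyStable_iff (H : Subgroup G) :
    ConjugacyStable H ↔ ∀ u ∈ H, u ≠ 1 → ∀ g ∉ H, g⁻¹ * u * g ∈ H →
      ∃ h ∈ H, h⁻¹ * u * h = g⁻¹ * u * g := by
  constructor
  · intro hcs u hu _ g _ hv
    exact hcs u _ hu hv ⟨g, rfl⟩
  · rintro hfuse u _ hu hv ⟨g, rfl⟩
    by_cases hu1 : u = 1
    · exact ⟨1, H.one_mem, by simp [hu1]⟩
    by_cases hg : g ∈ H
    · exact ⟨g, hg, rfl⟩
    exact hfuse u hu hu1 g hg hv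

/-- Fusion of `u` by `g` inside `H` is unchanged when `u` is conjugated by `e ∈ H` and `g` is
replaced by `e g f ∈ HgH`. -/
lemma exists_conj_eq_of_exists_conj_eq_mul_mul {H : Subgroup G} {u g e f : G}
    (he : e ∈ H) (hf : f ∈ H)
    (hfuse : ∃ x ∈ H, x⁻¹ * (e * u * e⁻¹) * x = (e * g * f)⁻¹ * (e * u * e⁻¹) * (e * g * f)) :
    ∃ h ∈ H, h⁻¹ * u * h = g⁻¹ * u * g := by
  obtain ⟨x, hx, hconj⟩ := hfuse
  refine ⟨e⁻¹ * x * f⁻¹, H.mul_mem (H.mul_mem (inv_mem he) hx) (inv_mem hf), ?_⟩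
  calc (e⁻¹ * x * f⁻¹)⁻¹ * u * (e⁻¹ * x * f⁻¹)
      = f * (x⁻¹ * (e * u * e⁻¹) * x) * f⁻¹ := by group
    _ = f * ((e * g * f)⁻¹ * (e * u * e⁻¹) * (e * g * f)) * f⁻¹ := by rw [hconj]
    _ = g⁻¹ * u * g := by group

end fusion

theorem limit_group_abelian_intersections_criterion_general {G : Type*} [Group G]
    (H : Subgroup G)
    (𝒥 : Set (Subgroup G))
    (h𝒥 : ∀ J ∈ 𝒥, J ≠ ⊥ ∧ J ≤ H ∧ ∀ x ∈ J, ∀ y ∈ J, Commute x y)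
    (hcover : ∀ g : G, g ∉ H → conjSubgroup g⁻¹ H ⊓ H ≠ ⊥ →
      ∃ J ∈ 𝒥, ∃ f ∈ H, conjSubgroup g⁻¹ H ⊓ H = conjSubgroup f⁻¹ J) :
    ConjugacyStable H ↔
      ∀ C ∈ 𝒥, ∀ D ∈ 𝒥, ∀ w : G, w ∉ H → conjSubgroup w⁻¹ C = D →
        ∀ u ∈ C, u ≠ 1 →
          ((H : Set G) ∩
            ((fun a => a * w) '' (Subgroup.centralizer {u} : Set G))).Nonempty := by
  simp only [inter_image_mul_centralizer_nonempty_iff, conjugacyStable_iff]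
  constructor
  · intro hfuse C hC D hD w hw hCD u hu hu1
    have hv : w⁻¹ * u * w ∈ D :=
      hCD ▸ mem_conjSubgroup.mpr (by simpa [mul_assoc] using hu)
    exact hfuse u ((h𝒥 C hC).2.1 hu) hu1 w hw ((h𝒥 D hD).2.1 hv)
  · intro hcrit u hu hu1 g hg hv
    have hu_inf : u ∈ conjSubgroup g H ⊓ H := ⟨mem_conjSubgroup.mpr hv, hu⟩
    have hv_inf : g⁻¹ * u * g ∈ conjSubgroup g⁻¹ H ⊓ H :=
      ⟨mem_conjSubgroup.mpr (by simpa [mul_assoc] using hu), hv⟩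
    obtain ⟨C, hC, e, he, hCe⟩ := hcover g⁻¹ (inv_mem_iff.not.mpr hg)
      (Subgroup.ne_bot_of_mem_of_ne_one (by rwa [inv_inv]) hu1)
    obtain ⟨D, hD, f, hf, hDf⟩ := hcover g hg
      (Subgroup.ne_bot_of_mem_of_ne_one hv_inf
        (by rwa [Ne, mul_assoc, inv_mul_eq_one, right_eq_mul]))
    rw [inv_inv] at hCe
    apply exists_conj_eq_of_exists_conj_eq_mul_mul he (inv_mem hf)
    refine hcrit C hC D hD _ ?_ (conjSubgroup_eq_of_inf_eq_conjSubgroup hCe hDf) _ ?_ ?_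
    · rwa [H.mul_mem_cancel_right (inv_mem hf), H.mul_mem_cancel_left he]
    · rw [hCe, mem_conjSubgroup, inv_inv] at hu_inf
      exact hu_inf
    · simpa using hu1

/-- In a commutative transitive group, the maximal abelian subgroup containing a
non-trivial abelian subgroup `C` is the centralizer of any non-trivial element of `C`;
here we express the non-emptiness of `H ∩ C̄w` via centralizers of non-trivial
elements of `C`. -/
theorem limit_group_abelian_intersections_criterion {G : Type*} [Group G]
    (hG : FullyResiduallyFree G) (H : Subgroup G)
    (𝒥 : Set (Subgroup G)) (hfin : 𝒥.Finite)
    (h𝒥 : ∀ J ∈ 𝒥, J ≠ ⊥ ∧ J ≤ H ∧ ∀ x ∈ J, ∀ y ∈ J, Commute x y)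
    (hcover : ∀ g : G, g ∉ H → conjSubgroup g⁻¹ H ⊓ H ≠ ⊥ →
      ∃ J ∈ 𝒥, ∃ f ∈ H, conjSubgroup g⁻¹ H ⊓ H = conjSubgroup f⁻¹ J) :
    ConjugacyStable H ↔
      ∀ C ∈ 𝒥, ∀ D ∈ 𝒥, ∀ w : G, w ∉ H → conjSubgroup w⁻¹ C = D →
        ∀ u ∈ C, u ≠ 1 →
          ((H : Set G) ∩
            ((fun a => a * w) '' (Subgroup.centralizer {u} : Set G))).Nonempty :=
  limit_group_abelian_intersections_criterion_general H 𝒥 h𝒥 hcover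
end
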